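/- arXiv:2401.06268 — 2 statements merged into one kernel-verified Lean document; each statement's English description precedes it below -/
import Mathlib

section
/- Let X be a Nakagami-m random variable with shape m > 0 and scale Ω > 0. Then for every s > 0, E[exp(−sX)] ≤ (2Γ(2m)/Γ(m)) · Ω^m · s^{−2m}. (Upper bound on the moment generating function of a Nakagami-m random variable; Theorem 4 of the paper.) -/
open MeasureTheory ProbabilityTheory Real

/-- The density of a Nakagami-`m` random variable with shape `m` and scale `Ω`:
`f_{m,Ω}(x) = (2 Ω^m / Γ(m)) x^(2m-1) exp(-Ω x²)` for `x > 0`, and `0` otherwise. -/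
noncomputable def nakagamiPDF (m Ω x : ℝ) : ℝ :=
  if 0 < x then 2 * Ω ^ m / Real.Gamma m * x ^ (2 * m - 1) * Real.exp (-Ω * x ^ 2) else 0

/-- `X` is a Nakagami-`m` random variable (shape `m`, scale `Ω`) on `(E, P)`:
its law has density `nakagamiPDF m Ω` with respect to Lebesgue measure. -/
def IsNakagami {E : Type*} [MeasurableSpace E] (P : MeasureTheory.Measure E)
    (X : E → ℝ) (m Ω : ℝ) : Prop :=
  MeasureTheory.Measure.map X P =
    MeasureTheory.volume.withDensity (fun x => ENNReal.ofReal (nakagamiPDF m Ω x))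

/-!
Since `exp (-Ω x²) ≤ 1`, the Nakagami density is dominated on `(0, ∞)` by
`(2 Ω^m / Γ(m)) x^(2m-1)`, and the Laplace transform of `x^(2m-1)` at `s` is `Γ(2m) s^(-2m)`.
-/

open Set

lemma measurable_nakagamiPDF (m Ω : ℝ) : Measurable (nakagamiPDF m Ω) :=
  Measurable.ite measurableSet_Ioi (by fun_prop) measurable_const

section

variable {m Ω : ℝ}

lemma nakagamiPDF_nonneg (hm : 0 < m) (hΩ : 0 ≤ Ω) (x : ℝ) : 0 ≤ nakagamiPDF m Ω x := by
  unfold nakagamiPDF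
  split_ifs
  · positivity
  · exact le_rfl

lemma nakagamiPDF_le_indicator (hm : 0 < m) (hΩ : 0 ≤ Ω) (x : ℝ) :
    nakagamiPDF m Ω x ≤ (Ioi 0).indicator (fun x => 2 * Ω ^ m / Gamma m * x ^ (2 * m - 1)) x := by
  unfold nakagamiPDF
  split_ifs with hx
  · rw [indicator_of_mem (mem_Ioi.mpr hx)]
    have hexp : exp (-Ω * x ^ 2) ≤ 1 := exp_le_one_iff.mpr (by nlinarith [sq_nonneg x])
    exact mul_le_of_le_one_right (by positivity) hexp
  · rw [indicator_of_notMem (by simpa using hx)]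

lemma IsNakagami.integral_comp {E : Type*} [MeasurableSpace E] {P : Measure E} {X : E → ℝ}
    (hNak : IsNakagami P X m Ω) (hX : AEMeasurable X P) (hm : 0 < m) (hΩ : 0 ≤ Ω)
    {g : ℝ → ℝ} (hg : Measurable g) :
    ∫ ω, g (X ω) ∂P = ∫ x, nakagamiPDF m Ω x * g x := by
  rw [← integral_map hX hg.aestronglyMeasurable, hNak,
    integral_withDensity_eq_integral_toReal_smul (measurable_nakagamiPDF m Ω).ennreal_ofReal
      (ae_of_all _ fun _ => ENNReal.ofReal_lt_top)]
  simp only [ENNReal.toReal_ofReal (nakagamiPDF_nonneg hm hΩ _), smul_eq_mul]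

lemma integral_nakagamiPDF_mul_exp_neg_mul_le (hm : 0 < m) (hΩ : 0 ≤ Ω) {s : ℝ} (hs : 0 < s) :
    ∫ x, nakagamiPDF m Ω x * exp (-s * x) ≤
      2 * Gamma (2 * m) / Gamma m * Ω ^ m * s ^ (-(2 * m)) := by
  set c := 2 * Ω ^ m / Gamma m
  have hmajorant : IntegrableOn (fun x => x ^ (2 * m - 1) * exp (-(s * x))) (Ioi 0) := by
    simpa only [rpow_one, neg_mul] using
      integrableOn_rpow_mul_exp_neg_mul_rpow (by linarith : (-1 : ℝ) < 2 * m - 1) one_pos hs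
  have hsplit : (fun x => (Ioi 0).indicator (fun x => c * x ^ (2 * m - 1)) x * exp (-s * x)) =
      (Ioi 0).indicator (fun x => c * (x ^ (2 * m - 1) * exp (-(s * x)))) := by
    ext x
    by_cases hx : x ∈ Ioi 0 <;> simp [hx, mul_assoc]
  calc ∫ x, nakagamiPDF m Ω x * exp (-s * x)
      ≤ ∫ x, (Ioi 0).indicator (fun x => c * x ^ (2 * m - 1)) x * exp (-s * x) := by
        refine integral_mono_of_nonneg (ae_of_all _ fun x => ?_) ?_ (ae_of_all _ fun x => ?_)
        · exact mul_nonneg (nakagamiPDF_nonneg hm hΩ x) (exp_nonneg _)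
        · rw [hsplit]
          exact IntegrableOn.integrable_indicator (hmajorant.const_mul c) measurableSet_Ioi
        · exact mul_le_mul_of_nonneg_right (nakagamiPDF_le_indicator hm hΩ x) (exp_nonneg _)
    _ = c * ((1 / s) ^ (2 * m) * Gamma (2 * m)) := by
        rw [hsplit, integral_indicator measurableSet_Ioi, integral_const_mul,
          integral_rpow_mul_exp_neg_mul_Ioi (by linarith) hs]
    _ = 2 * Gamma (2 * m) / Gamma m * Ω ^ m * s ^ (-(2 * m)) := by
        rw [rpow_neg hs.le, one_div, inv_rpow hs.le]
        ring

end

theorem nakagami_mgf_upper_bound_general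
    {E : Type*} [MeasurableSpace E] (P : Measure E)
    (m Ω : ℝ) (hm : 0 < m) (hΩ : 0 < Ω)
    (X : E → ℝ) (hX : Measurable X) (hNak : IsNakagami P X m Ω)
    (s : ℝ) (hs : 0 < s) :
    ∫ ω, Real.exp (-s * X ω) ∂P ≤
      2 * Real.Gamma (2 * m) / Real.Gamma m * Ω ^ m * s ^ (-(2 * m)) := by
  rw [hNak.integral_comp (g := fun x => exp (-s * x)) hX.aemeasurable hm hΩ.le (by fun_prop)]
  exact integral_nakagamiPDF_mul_exp_neg_mul_le hm hΩ.le hs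

/-- Upper bound on the MGF of a Nakagami-`m` random variable:
for `s > 0`, `E[exp(-s X)] ≤ (2 Γ(2m)/Γ(m)) Ω^m s^(-2m)`. -/
theorem nakagami_mgf_upper_bound
    {E : Type*} [MeasurableSpace E] (P : Measure E) [IsProbabilityMeasure P]
    (m Ω : ℝ) (hm : 0 < m) (hΩ : 0 < Ω)
    (X : E → ℝ) (hX : Measurable X) (hNak : IsNakagami P X m Ω)
    (s : ℝ) (hs : 0 < s) :
    ∫ ω, Real.exp (-s * X ω) ∂P ≤
      2 * Real.Gamma (2 * m) / Real.Gamma m * Ω ^ m * s ^ (-(2 * m)) :=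
  nakagami_mgf_upper_bound_general P m Ω hm hΩ X hX hNak s hs
end

section
/- Let m_1 > m_2 > 0, Ω_1, Ω_2 > 0, m_0 > 0, Ω_0 > 0, and let N ≥ 1. Let X_0, X_{1,1}, …, X_{1,N}, X_{2,1}, …, X_{2,N} be mutually independent random variables, where X_0 is Nakagami with shape m_0 and scale Ω_0, each X_{1,n} is Nakagami with shape m_1 and scale Ω_1, and each X_{2,n} is Nakagami with shape m_2 and scale Ω_2; set H = Σ_{n=1}^N X_{1,n} X_{2,n}, C = 2 (Γ(2m_2)/Γ(m_2)) (Γ(m_1 − m_2)/Γ(m_1)) (Ω_1 Ω_2)^{m_2}, and t = m_0 + N m_2. Then for every ρ > 0 and every threshold γ_th > 0, the outage probability with direct link satisfies P(ρ (X_0 + H)² ≤ γ_th) ≤ 2 (Γ(2m_0)/Γ(m_0)) Ω_0^{m_0} · C^N · (γ_th/ρ)^{t} / Γ(2t + 1). (Upper bound on the outage probability of an IRS-assisted system with a direct link; equation (28) of the paper.) -/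
open MeasureTheory ProbabilityTheory Real

/-!
Call `(a, p)` a power bound for a law `μ` on `ℝ` when `μ (-∞, x] ≤ a x₊ ^ p / Γ(p + 1)`, i.e. the
CDF of `μ` is dominated by that of `a t ^ (p - 1) / Γ(p) dt` on `t > 0`. Power bounds are stable
under convolution, constants multiplying and exponents adding, because of the Beta integral
`∫₀ˣ (x - t) ^ p t ^ (q - 1) dt = Γ(p + 1) Γ(q) / Γ(p + q + 1) x ^ (p + q)`.
A Nakagami law has the power bound `(2 Γ(2m) Ω^m / Γ(m), 2m)` since `exp (-Ω x²) ≤ 1`, and the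
product `X₁ X₂` of independent Nakagami variables has `(C, 2 m₂)`: condition on `X₁` and use the
negative moment `E[X₁ ^ (-2 m₂)] = Γ(m₁ - m₂) Ω₁ ^ m₂ / Γ(m₁)`, finite because `m₂ < m₁`.
So `X₀ + H` has the power bound `(2 Γ(2m₀) Ω₀^m₀ / Γ(m₀) · C^N, 2t)`, and `ρ (X₀ + H)² ≤ γ_th`
forces `X₀ + H ≤ √(γ_th / ρ)`.
-/

open Set

lemma integral_rpow_mul_one_sub_rpow {p q : ℝ} (hp : 0 < p) (hq : 0 < q) :
    ∫ s in (0:ℝ)..1, s ^ (q - 1) * (1 - s) ^ p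
      = Real.Gamma q * Real.Gamma (p + 1) / Real.Gamma (q + p + 1) := by
  have hβ := Complex.Gamma_mul_Gamma_eq_betaIntegral (s := (q : ℂ)) (t := ((p + 1 : ℝ) : ℂ))
    (by simpa using hq) (by simpa using (by linarith : 0 < p + 1))
  have hreal : Complex.betaIntegral (q : ℂ) ((p + 1 : ℝ) : ℂ)
      = ((∫ s in (0:ℝ)..1, s ^ (q - 1) * (1 - s) ^ p : ℝ) : ℂ) := by
    rw [Complex.betaIntegral, ← intervalIntegral.integral_ofReal]
    refine intervalIntegral.integral_congr fun s hs => ?_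
    rw [uIcc_of_le zero_le_one] at hs
    rw [Complex.ofReal_mul, Complex.ofReal_cpow hs.1, Complex.ofReal_cpow (by linarith [hs.2])]
    push_cast
    ring_nf
  have hsum : (q : ℂ) + ((p + 1 : ℝ) : ℂ) = ((q + p + 1 : ℝ) : ℂ) := by push_cast; ring
  rw [hreal, hsum, Complex.Gamma_ofReal, Complex.Gamma_ofReal, Complex.Gamma_ofReal] at hβ
  have hβ' : Real.Gamma q * Real.Gamma (p + 1)
      = Real.Gamma (q + p + 1) * ∫ s in (0:ℝ)..1, s ^ (q - 1) * (1 - s) ^ p := by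
    exact_mod_cast hβ
  rw [hβ', mul_div_cancel_left₀ _ (Real.Gamma_pos_of_pos (by linarith)).ne']

lemma integral_sub_rpow_mul_rpow {p q x : ℝ} (hp : 0 < p) (hq : 0 < q) (hx : 0 < x) :
    ∫ t in (0:ℝ)..x, (x - t) ^ p * t ^ (q - 1)
      = Real.Gamma (p + 1) * Real.Gamma q / Real.Gamma (p + q + 1) * x ^ (p + q) := by
  have hsubst : ∫ t in (0:ℝ)..x, (x - t) ^ p * t ^ (q - 1)
      = x * ∫ s in (0:ℝ)..1, (x - x * s) ^ p * (x * s) ^ (q - 1) := by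
    simpa using (intervalIntegral.smul_integral_comp_mul_left
      (a := 0) (b := 1) (fun t => (x - t) ^ p * t ^ (q - 1)) x).symm
  have hscale : ∫ s in (0:ℝ)..1, (x - x * s) ^ p * (x * s) ^ (q - 1)
      = x ^ (p + q - 1) * ∫ s in (0:ℝ)..1, s ^ (q - 1) * (1 - s) ^ p := by
    rw [← intervalIntegral.integral_const_mul]
    refine intervalIntegral.integral_congr fun s hs => ?_
    rw [uIcc_of_le zero_le_one] at hs
    rw [show x - x * s = x * (1 - s) by ring, Real.mul_rpow hx.le (by linarith [hs.2]),
      Real.mul_rpow hx.le hs.1, show p + q - 1 = p + (q - 1) by ring, Real.rpow_add hx]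
    ring
  rw [hsubst, hscale, integral_rpow_mul_one_sub_rpow hp hq, ← mul_assoc,
    ← Real.rpow_one_add' hx.le (by linarith), show 1 + (p + q - 1) = p + q by ring,
    show q + p + 1 = p + q + 1 by ring]
  ring

lemma lintegral_Ioi_max_sub_rpow_mul_rpow {p q : ℝ} (hp : 0 < p) (hq : 0 < q) (x : ℝ) :
    ∫⁻ t in Ioi 0, ENNReal.ofReal (max (x - t) 0 ^ p * t ^ (q - 1))
      = ENNReal.ofReal (Real.Gamma (p + 1) * Real.Gamma q / Real.Gamma (p + q + 1)
          * max x 0 ^ (p + q)) := by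
  have hvanish : ∀ t, x ≤ t → ENNReal.ofReal (max (x - t) 0 ^ p * t ^ (q - 1)) = 0 := by
    intro t ht
    rw [max_eq_right (by linarith), Real.zero_rpow hp.ne', zero_mul, ENNReal.ofReal_zero]
  rcases le_or_gt x 0 with hx | hx
  · rw [setLIntegral_congr_fun measurableSet_Ioi fun t ht => hvanish t (hx.trans ht.le),
      lintegral_zero, max_eq_right hx, Real.zero_rpow (by positivity), mul_zero,
      ENNReal.ofReal_zero]
  have hsplit : Ioi (0:ℝ) = Ioc 0 x ∪ Ioi x := (Ioc_union_Ioi_eq_Ioi hx.le).symm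
  rw [hsplit, lintegral_union measurableSet_Ioi (Ioc_disjoint_Ioi le_rfl),
    setLIntegral_congr_fun measurableSet_Ioi fun t ht => hvanish t (le_of_lt ht), lintegral_zero,
    add_zero, setLIntegral_congr_fun measurableSet_Ioc fun t ht => by
      rw [max_eq_left (by linarith [ht.2])],
    ← ofReal_integral_eq_lintegral_ofReal, ← intervalIntegral.integral_of_le hx.le,
    integral_sub_rpow_mul_rpow hp hq hx, max_eq_left hx.le]
  · refine Integrable.bdd_mul (c := x ^ p) ?_ (Measurable.aestronglyMeasurable (by fun_prop)) ?_
    · exact (intervalIntegrable_iff_integrableOn_Ioc_of_le hx.le).mp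
        (intervalIntegral.intervalIntegrable_rpow' (by linarith))
    · refine (ae_restrict_iff' measurableSet_Ioc).mpr (ae_of_all _ fun t ht => ?_)
      rw [Real.norm_eq_abs, abs_of_nonneg (Real.rpow_nonneg (by linarith [ht.2]) _)]
      exact Real.rpow_le_rpow (by linarith [ht.2]) (by linarith [ht.1]) hp.le
  · refine (ae_restrict_iff' measurableSet_Ioc).mpr (ae_of_all _ fun t ht => ?_)
    have := Real.rpow_nonneg (by linarith [ht.2] : (0:ℝ) ≤ x - t) p
    have := Real.rpow_nonneg ht.1.le (q - 1)
    positivity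

lemma integral_mul_rpow_sub_one {q : ℝ} (hq : 0 < q) (w : ℝ) :
    ∫ t in (0:ℝ)..w, q * t ^ (q - 1) = w ^ q := by
  rw [intervalIntegral.integral_const_mul, integral_rpow (Or.inl (by linarith)),
    sub_add_cancel, Real.zero_rpow hq.ne', sub_zero, mul_div_cancel₀ _ hq.ne']

def PowCDFBound (μ : Measure ℝ) (a p : ℝ) : Prop :=
  ∀ x, μ (Iic x) ≤ ENNReal.ofReal (a / Real.Gamma (p + 1) * max x 0 ^ p)

lemma PowCDFBound.lintegral_max_sub_rpow_le {μ : Measure ℝ} {a p q : ℝ} (h : PowCDFBound μ a p)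
    (ha : 0 ≤ a) (hp : 0 < p) (hq : 0 < q) (x : ℝ) :
    ∫⁻ u, ENNReal.ofReal (max (x - u) 0 ^ q) ∂μ
      ≤ ENNReal.ofReal (a * Real.Gamma (q + 1) / Real.Gamma (p + q + 1) * max x 0 ^ (p + q)) := by
  have hlayer := lintegral_comp_eq_lintegral_meas_lt_mul μ
    (ae_of_all _ fun u => le_max_right (x - u) 0) (by fun_prop : Measurable _).aemeasurable
    (fun t _ => (intervalIntegral.intervalIntegrable_rpow' (r := q - 1) (by linarith)).const_mul q)
    ((ae_restrict_iff' measurableSet_Ioi).mpr (ae_of_all _ fun t ht =>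
      mul_nonneg hq.le (Real.rpow_nonneg (le_of_lt ht) _)))
  simp only [integral_mul_rpow_sub_one hq] at hlayer
  have hlevel : ∀ t ∈ Ioi (0:ℝ), μ {u | t < max (x - u) 0} * ENNReal.ofReal (q * t ^ (q - 1))
      ≤ ENNReal.ofReal (a * q / Real.Gamma (p + 1)) *
          ENNReal.ofReal (max (x - t) 0 ^ p * t ^ (q - 1)) := by
    intro t ht
    have hsub : {u | t < max (x - u) 0} ⊆ Iic (x - t) := fun u (hu : t < max (x - u) 0) => by
      rcases lt_max_iff.mp hu with hu | hu <;> simp only [mem_Iic] <;> linarith [mem_Ioi.mp ht]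
    calc μ {u | t < max (x - u) 0} * ENNReal.ofReal (q * t ^ (q - 1))
        ≤ ENNReal.ofReal (a / Real.Gamma (p + 1) * max (x - t) 0 ^ p) *
            ENNReal.ofReal (q * t ^ (q - 1)) := by gcongr; exact (measure_mono hsub).trans (h _)
      _ = _ := by
        rw [← ENNReal.ofReal_mul (by positivity), ← ENNReal.ofReal_mul (by positivity)]
        ring_nf
  calc ∫⁻ u, ENNReal.ofReal (max (x - u) 0 ^ q) ∂μ
      ≤ ∫⁻ t in Ioi 0, ENNReal.ofReal (a * q / Real.Gamma (p + 1)) *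
          ENNReal.ofReal (max (x - t) 0 ^ p * t ^ (q - 1)) :=
        hlayer.trans_le (setLIntegral_mono' measurableSet_Ioi hlevel)
    _ = _ := by
      rw [lintegral_const_mul _ (by fun_prop), lintegral_Ioi_max_sub_rpow_mul_rpow hp hq,
        ← ENNReal.ofReal_mul (by positivity), Real.Gamma_add_one hq.ne']
      congr 1
      field_simp

lemma PowCDFBound.conv {μ ν : Measure ℝ} [SFinite ν] {a p b q : ℝ} (hμ : PowCDFBound μ a p)
    (hν : PowCDFBound ν b q) (ha : 0 ≤ a) (hb : 0 ≤ b) (hp : 0 < p) (hq : 0 < q) :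
    PowCDFBound (μ ∗ ν) (a * b) (p + q) := by
  intro x
  have hs : MeasurableSet {z : ℝ × ℝ | z.1 + z.2 ≤ x} :=
    measurableSet_le (by fun_prop) (by fun_prop)
  have hsection : ∀ u : ℝ, Prod.mk u ⁻¹' {z : ℝ × ℝ | z.1 + z.2 ≤ x} = Iic (x - u) := fun u => by
    ext v; simp [le_sub_iff_add_le']
  rw [Measure.conv, Measure.map_apply measurable_add measurableSet_Iic]
  calc (μ.prod ν) ((fun z : ℝ × ℝ => z.1 + z.2) ⁻¹' Iic x)
      = ∫⁻ u, ν (Iic (x - u)) ∂μ := by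
        change (μ.prod ν) {z : ℝ × ℝ | z.1 + z.2 ≤ x} = _
        rw [Measure.prod_apply hs]
        simp only [hsection]
    _ ≤ ∫⁻ u, ENNReal.ofReal (b / Real.Gamma (q + 1)) *
          ENNReal.ofReal (max (x - u) 0 ^ q) ∂μ := lintegral_mono fun u => by
        rw [← ENNReal.ofReal_mul (by positivity)]
        exact hν (x - u)
    _ ≤ ENNReal.ofReal (b / Real.Gamma (q + 1)) *
          ENNReal.ofReal (a * Real.Gamma (q + 1) / Real.Gamma (p + q + 1) * max x 0 ^ (p + q)) := by
        rw [lintegral_const_mul _ (by fun_prop)]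
        gcongr
        exact hμ.lintegral_max_sub_rpow_le ha hp hq x
    _ = _ := by
        rw [← ENNReal.ofReal_mul (by positivity)]
        congr 1
        field_simp

lemma PowCDFBound.mconv {μ ν : Measure ℝ} [SFinite ν] {b q M : ℝ} (hν : PowCDFBound ν b q)
    (hb : 0 ≤ b) (hq : 0 < q) (hμ : ∀ᵐ u ∂μ, 0 < u)
    (hM : ∫⁻ u, ENNReal.ofReal (u ^ (-q)) ∂μ ≤ ENNReal.ofReal M) :
    PowCDFBound (μ ∗ₘ ν) (M * b) q := by
  intro x
  have hs : MeasurableSet {z : ℝ × ℝ | z.1 * z.2 ≤ x} :=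
    measurableSet_le (by fun_prop) (by fun_prop)
  set A := b / Real.Gamma (q + 1) * max x 0 ^ q
  have hA : 0 ≤ A := by positivity
  have hsection : ∀ u, 0 < u → ν (Prod.mk u ⁻¹' {z : ℝ × ℝ | z.1 * z.2 ≤ x})
      ≤ ENNReal.ofReal A * ENNReal.ofReal (u ^ (-q)) := fun u hu => by
    have hIic : Prod.mk u ⁻¹' {z : ℝ × ℝ | z.1 * z.2 ≤ x} = Iic (x / u) := by
      ext v; simp [le_div_iff₀ hu, mul_comm]
    rw [hIic, ← ENNReal.ofReal_mul hA]
    refine (hν _).trans_eq (congrArg ENNReal.ofReal ?_)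
    have hmax : max (x / u) 0 = max x 0 / u := by rw [← max_div_div_right hu.le, zero_div]
    rw [hmax, Real.div_rpow (le_max_right _ _) hu.le, Real.rpow_neg hu.le]
    ring
  rw [Measure.mconv, Measure.map_apply measurable_mul measurableSet_Iic]
  calc (μ.prod ν) ((fun z : ℝ × ℝ => z.1 * z.2) ⁻¹' Iic x)
      = ∫⁻ u, ν (Prod.mk u ⁻¹' {z : ℝ × ℝ | z.1 * z.2 ≤ x}) ∂μ := Measure.prod_apply hs
    _ ≤ ∫⁻ u, ENNReal.ofReal A * ENNReal.ofReal (u ^ (-q)) ∂μ :=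
      lintegral_mono_ae (hμ.mono hsection)
    _ ≤ ENNReal.ofReal A * ENNReal.ofReal M := by
      rw [lintegral_const_mul _ (by fun_prop)]
      gcongr
    _ = _ := by
      rw [← ENNReal.ofReal_mul hA]
      congr 1
      ring

lemma powCDFBound_withDensity {f : ℝ → ENNReal} {a p : ℝ} (ha : 0 ≤ a) (hp : 0 < p)
    (hf : ∀ t, f t ≤ (Ioi 0).indicator
      (fun t => ENNReal.ofReal (a / Real.Gamma p * t ^ (p - 1))) t) :
    PowCDFBound (volume.withDensity f) a p := by
  intro x
  rw [withDensity_apply _ measurableSet_Iic]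
  calc ∫⁻ t in Iic x, f t
      ≤ ∫⁻ t in Iic x, (Ioi 0).indicator
          (fun t => ENNReal.ofReal (a / Real.Gamma p * t ^ (p - 1))) t := lintegral_mono hf
    _ = ∫⁻ t in Ioc 0 x, ENNReal.ofReal (a / Real.Gamma (p + 1) * (p * t ^ (p - 1))) := by
      rw [lintegral_indicator measurableSet_Ioi, Measure.restrict_restrict measurableSet_Ioi,
        Ioi_inter_Iic, Real.Gamma_add_one hp.ne']
      refine setLIntegral_congr_fun measurableSet_Ioc fun t _ => ?_
      field_simp
    _ ≤ _ := by
      rcases le_or_gt x 0 with hx | hx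
      · simp [Ioc_eq_empty_of_le hx]
      rw [← ofReal_integral_eq_lintegral_ofReal, integral_const_mul,
        ← intervalIntegral.integral_of_le hx.le, integral_mul_rpow_sub_one hp, max_eq_left hx.le]
      · exact ((intervalIntegral.intervalIntegrable_rpow' (by linarith)).const_mul p).1.const_mul _
      · refine (ae_restrict_iff' measurableSet_Ioc).mpr (ae_of_all _ fun t ht => ?_)
        have := Real.rpow_nonneg ht.1.le (p - 1)
        positivity

lemma PowCDFBound.toReal_measure_mul_sq_le {μ : Measure ℝ} {a p ρ γ : ℝ} (h : PowCDFBound μ a p)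
    (ha : 0 ≤ a) (hp : 0 ≤ p) (hρ : 0 < ρ) (hγ : 0 ≤ γ) :
    (μ {x | ρ * x ^ 2 ≤ γ}).toReal ≤ a / Real.Gamma (p + 1) * (γ / ρ) ^ (p / 2) := by
  have hγρ : 0 ≤ γ / ρ := by positivity
  have hsub : {x : ℝ | ρ * x ^ 2 ≤ γ} ⊆ Iic (√(γ / ρ)) := fun x (hx : ρ * x ^ 2 ≤ γ) =>
    (le_abs_self x).trans (Real.abs_le_sqrt ((le_div_iff₀' hρ).mpr hx))
  refine ENNReal.toReal_le_of_le_ofReal (by positivity) ((measure_mono hsub).trans ?_)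
  refine (h _).trans_eq (congrArg ENNReal.ofReal ?_)
  rw [max_eq_left (Real.sqrt_nonneg _), Real.sqrt_eq_rpow, ← Real.rpow_mul hγρ]
  ring_nf

lemma powCDFBound_map_finsetSum {ι Ω : Type*} [MeasurableSpace Ω] {P : Measure Ω}
    [IsFiniteMeasure P] {Z : ι → Ω → ℝ} (hZ : ∀ i, Measurable (Z i))
    (hindep : ∀ (s : Finset ι) (j : ι), j ∉ s → IndepFun (∑ i ∈ s, Z i) (Z j) P)
    {a p : ι → ℝ} (ha : ∀ i, 0 ≤ a i) (hp : ∀ i, 0 < p i)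
    (hbound : ∀ i, PowCDFBound (P.map (Z i)) (a i) (p i)) {s : Finset ι} (hs : s.Nonempty) :
    PowCDFBound (P.map (∑ i ∈ s, Z i)) (∏ i ∈ s, a i) (∑ i ∈ s, p i) := by
  induction hs using Finset.Nonempty.cons_induction with
  | singleton i => simpa using hbound i
  | cons j s hj hs ih =>
    rw [Finset.sum_cons, Finset.prod_cons, Finset.sum_cons,
      (hindep s j hj).symm.map_add_eq_map_conv_map (hZ j)
        (by rw [Finset.sum_fn]; exact Finset.measurable_sum s fun i _ => hZ i)]
    exact (hbound j).conv ih (ha j) (Finset.prod_nonneg fun i _ => ha i) (hp j)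
      (Finset.sum_pos (fun i _ => hp i) hs)

lemma measurable_iSup_comap {Ω ι β : Type*} [mβ : MeasurableSpace β] {f : ι → Ω → β}
    {S : Set ι} {k : ι} (hk : k ∈ S) : Measurable[⨆ i ∈ S, mβ.comap (f i)] (f k) :=
  (comap_measurable (f k)).mono (le_iSup₂ (f := fun i _ => mβ.comap (f i)) k hk) le_rfl

namespace ProbabilityTheory

variable {Ω ι β : Type*} [MeasurableSpace Ω] {μ : Measure Ω} [mβ : MeasurableSpace β]
  {f : ι → Ω → β}

lemma iIndepFun.indepFun_of_measurable_iSup {γ δ : Type*} [MeasurableSpace γ] [MeasurableSpace δ]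
    (hf : iIndepFun f μ) (hfm : ∀ i, Measurable (f i)) {S T : Set ι} (hST : Disjoint S T)
    {g : Ω → γ} {h : Ω → δ} (hg : Measurable[⨆ i ∈ S, mβ.comap (f i)] g)
    (hh : Measurable[⨆ i ∈ T, mβ.comap (f i)] h) : IndepFun g h μ := by
  rw [IndepFun_iff_Indep]
  exact indep_of_indep_of_le (indep_iSup_of_disjoint (fun i => (hfm i).comap_le) hf.iIndep hST)
    hg.comap_le hh.comap_le

lemma iIndepFun.indepFun_finsetSum_of_blocks {κ : Type*} (hf : iIndepFun f μ)
    (hfm : ∀ i, Measurable (f i)) (block : ι → κ) {Z : κ → Ω → ℝ}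
    (hZ : ∀ j, Measurable[⨆ i ∈ block ⁻¹' {j}, mβ.comap (f i)] (Z j)) {s : Finset κ} {j : κ}
    (hj : j ∉ s) : IndepFun (∑ k ∈ s, Z k) (Z j) μ := by
  refine hf.indepFun_of_measurable_iSup hfm (S := block ⁻¹' s) (T := block ⁻¹' {j}) ?_ ?_ (hZ j)
  · exact (Set.disjoint_singleton_right.mpr hj).preimage block
  · rw [Finset.sum_fn]
    refine Finset.measurable_sum s fun k hk => (hZ k).mono ?_ le_rfl
    exact biSup_mono fun i (hi : block i = k) => show block i ∈ (s : Set κ) from hi ▸ hk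

end ProbabilityTheory

/-- `IsNakagami P X m Ω` unfolds to `P.map X = nakagamiMeasure m Ω`. -/
noncomputable def nakagamiMeasure (m Ω : ℝ) : Measure ℝ :=
  volume.withDensity fun x => ENNReal.ofReal (nakagamiPDF m Ω x)

instance (m Ω : ℝ) : SFinite (nakagamiMeasure m Ω) := by
  unfold nakagamiMeasure; infer_instance

lemma powCDFBound_nakagamiMeasure {m Ω : ℝ} (hm : 0 < m) (hΩ : 0 < Ω) :
    PowCDFBound (nakagamiMeasure m Ω) (2 * (Real.Gamma (2 * m) / Real.Gamma m) * Ω ^ m)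
      (2 * m) := by
  refine powCDFBound_withDensity (by positivity) (by positivity) fun t => ?_
  unfold nakagamiPDF
  split_ifs with ht
  · rw [indicator_of_mem (mem_Ioi.mpr ht)]
    refine ENNReal.ofReal_le_ofReal ?_
    have hexp : Real.exp (-Ω * t ^ 2) ≤ 1 := Real.exp_le_one_iff.mpr (by nlinarith)
    have : 0 ≤ 2 * Ω ^ m / Real.Gamma m * t ^ (2 * m - 1) := by positivity
    calc 2 * Ω ^ m / Real.Gamma m * t ^ (2 * m - 1) * Real.exp (-Ω * t ^ 2)
        ≤ 2 * Ω ^ m / Real.Gamma m * t ^ (2 * m - 1) := mul_le_of_le_one_right this hexp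
      _ = _ := by field_simp
  · simp

lemma ae_pos_nakagamiMeasure (m Ω : ℝ) : ∀ᵐ u ∂nakagamiMeasure m Ω, 0 < u := by
  rw [nakagamiMeasure, ae_withDensity_iff (measurable_nakagamiPDF m Ω).ennreal_ofReal]
  refine ae_of_all _ fun u hu => ?_
  by_contra hle
  simp [nakagamiPDF, hle] at hu

lemma lintegral_rpow_nakagamiMeasure {m Ω r : ℝ} (hm : 0 < m) (hΩ : 0 < Ω) (hr : -(2 * m) < r) :
    ∫⁻ u, ENNReal.ofReal (u ^ r) ∂nakagamiMeasure m Ω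
      = ENNReal.ofReal (Real.Gamma (m + r / 2) / Real.Gamma m * Ω ^ (-(r / 2))) := by
  have hintegrand : ∀ u, ENNReal.ofReal (nakagamiPDF m Ω u) * ENNReal.ofReal (u ^ r)
      = (Ioi 0).indicator (fun u => ENNReal.ofReal
          (2 * Ω ^ m / Real.Gamma m * (u ^ (2 * m - 1 + r) * Real.exp (-Ω * u ^ 2)))) u := by
    intro u
    unfold nakagamiPDF
    split_ifs with hu
    · rw [indicator_of_mem (mem_Ioi.mpr hu), ← ENNReal.ofReal_mul (by positivity),
        Real.rpow_add hu]
      ring_nf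
    · simp [hu]
  rw [nakagamiMeasure, lintegral_withDensity_eq_lintegral_mul _
    (measurable_nakagamiPDF m Ω).ennreal_ofReal (by fun_prop)]
  simp only [Pi.mul_apply, hintegrand]
  rw [lintegral_indicator measurableSet_Ioi, ← ofReal_integral_eq_lintegral_ofReal,
    integral_const_mul]
  · have hgamma := integral_rpow_mul_exp_neg_mul_rpow (p := 2) (q := 2 * m - 1 + r)
      two_pos (by linarith) hΩ
    simp only [Real.rpow_two] at hgamma
    rw [hgamma, show (2 * m - 1 + r + 1) / 2 = m + r / 2 by ring,
      show -(2 * m - 1 + r + 1) / 2 = -m + -(r / 2) by ring, Real.rpow_add hΩ, Real.rpow_neg hΩ.le]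
    congr 1
    field_simp
  · exact (integrableOn_rpow_mul_exp_neg_mul_sq hΩ (by linarith)).const_mul _
  · refine (ae_restrict_iff' measurableSet_Ioi).mpr (ae_of_all _ fun u (hu : 0 < u) => ?_)
    positivity

lemma powCDFBound_nakagamiMeasure_mconv {m₁ m₂ Ω₁ Ω₂ : ℝ} (hm₂ : 0 < m₂) (hm₁₂ : m₂ < m₁)
    (hΩ₁ : 0 < Ω₁) (hΩ₂ : 0 < Ω₂) :
    PowCDFBound (nakagamiMeasure m₁ Ω₁ ∗ₘ nakagamiMeasure m₂ Ω₂)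
      (2 * (Real.Gamma (2 * m₂) / Real.Gamma m₂) * (Real.Gamma (m₁ - m₂) / Real.Gamma m₁) *
        (Ω₁ * Ω₂) ^ m₂) (2 * m₂) := by
  have hmoment :=
    lintegral_rpow_nakagamiMeasure (m := m₁) (r := -(2 * m₂)) (by linarith) hΩ₁ (by linarith)
  rw [show m₁ + -(2 * m₂) / 2 = m₁ - m₂ by ring, show -(-(2 * m₂) / 2) = m₂ by ring] at hmoment
  have hbound := (powCDFBound_nakagamiMeasure hm₂ hΩ₂).mconv (by positivity) (by positivity)
    (ae_pos_nakagamiMeasure m₁ Ω₁) hmoment.le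
  convert hbound using 1
  rw [Real.mul_rpow hΩ₁.le hΩ₂.le]
  ring

lemma IsNakagami.powCDFBound_map_mul {E : Type*} [MeasurableSpace E] {P : Measure E}
    [IsFiniteMeasure P] {X Y : E → ℝ} {m₁ m₂ Ω₁ Ω₂ : ℝ} (hX : IsNakagami P X m₁ Ω₁)
    (hY : IsNakagami P Y m₂ Ω₂) (hXm : Measurable X) (hYm : Measurable Y) (hXY : IndepFun X Y P)
    (hm₂ : 0 < m₂) (hm₁₂ : m₂ < m₁) (hΩ₁ : 0 < Ω₁) (hΩ₂ : 0 < Ω₂) :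
    PowCDFBound (P.map (X * Y))
      (2 * (Real.Gamma (2 * m₂) / Real.Gamma m₂) * (Real.Gamma (m₁ - m₂) / Real.Gamma m₁) *
        (Ω₁ * Ω₂) ^ m₂) (2 * m₂) := by
  rw [hXY.map_mul_eq_map_mconv_map hXm hYm, hX, hY]
  exact powCDFBound_nakagamiMeasure_mconv hm₂ hm₁₂ hΩ₁ hΩ₂

/-- `none` is the direct link, `some n` the path through the reflecting element `n`. -/
def linkTerm {E ι : Type*} (X₀ : E → ℝ) (X₁ X₂ : ι → E → ℝ) : Option ι → E → ℝ :=
  fun o => o.elim X₀ fun n => X₁ n * X₂ n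

lemma sum_linkTerm {E ι : Type*} [Fintype ι] (X₀ : E → ℝ) (X₁ X₂ : ι → E → ℝ) :
    ∑ o, linkTerm X₀ X₁ X₂ o = fun ω => X₀ ω + ∑ n, X₁ n ω * X₂ n ω := by
  ext ω
  simp [linkTerm, Fintype.sum_option, Finset.sum_apply]

section LinkTerm

variable {E ι : Type*} [MeasurableSpace E] {X₀ : E → ℝ} {X₁ X₂ : ι → E → ℝ}

lemma measurable_linkTerm (hX₀ : Measurable X₀) (hX₁ : ∀ n, Measurable (X₁ n))
    (hX₂ : ∀ n, Measurable (X₂ n)) (o : Option ι) : Measurable (linkTerm X₀ X₁ X₂ o) := by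
  cases o
  exacts [hX₀, (hX₁ _).mul (hX₂ _)]

lemma ProbabilityTheory.iIndepFun.indepFun_finsetSum_linkTerm {P : Measure E}
    (hIndep : iIndepFun (fun o : Option (ι ⊕ ι) => o.elim X₀ (Sum.elim X₁ X₂)) P)
    (hX₀ : Measurable X₀) (hX₁ : ∀ n, Measurable (X₁ n)) (hX₂ : ∀ n, Measurable (X₂ n))
    {s : Finset (Option ι)} {j : Option ι} (hj : j ∉ s) :
    IndepFun (∑ o ∈ s, linkTerm X₀ X₁ X₂ o) (linkTerm X₀ X₁ X₂ j) P := by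
  set f : Option (ι ⊕ ι) → E → ℝ := fun o => o.elim X₀ (Sum.elim X₁ X₂)
  -- `linkTerm (some n)` only involves the coordinates `inl n` and `inr n`, the fibre over `n`.
  set block : Option (ι ⊕ ι) → Option ι := Option.map (Sum.elim id id)
  have hf : ∀ i, Measurable (f i) := by
    rintro (_ | n | n)
    exacts [hX₀, hX₁ n, hX₂ n]
  refine hIndep.indepFun_finsetSum_of_blocks hf block (fun o => ?_) hj
  cases o with
  | none => exact measurable_iSup_comap (S := block ⁻¹' {none}) (k := none) rfl
  | some n =>
    have h₁ := measurable_iSup_comap (f := f) (S := block ⁻¹' {some n}) (k := some (.inl n)) rfl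
    have h₂ := measurable_iSup_comap (f := f) (S := block ⁻¹' {some n}) (k := some (.inr n)) rfl
    exact h₁.mul h₂

end LinkTerm

theorem irs_direct_link_outage_upper_bound_general
    {E : Type*} [MeasurableSpace E] (P : Measure E) [IsProbabilityMeasure P]
    (m₁ m₂ Ω₁ Ω₂ m₀ Ω₀ : ℝ) (hm₂ : 0 < m₂) (hm₁₂ : m₂ < m₁) (hΩ₁ : 0 < Ω₁) (hΩ₂ : 0 < Ω₂)
    (hm₀ : 0 < m₀) (hΩ₀ : 0 < Ω₀)
    (N : ℕ)
    (X₀ : E → ℝ) (X₁ X₂ : Fin N → E → ℝ)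
    (hX₀ : Measurable X₀)
    (hX₁ : ∀ n, Measurable (X₁ n)) (hX₂ : ∀ n, Measurable (X₂ n))
    (hNak₀ : IsNakagami P X₀ m₀ Ω₀)
    (hNak₁ : ∀ n, IsNakagami P (X₁ n) m₁ Ω₁) (hNak₂ : ∀ n, IsNakagami P (X₂ n) m₂ Ω₂)
    (hIndep : iIndepFun
      (fun o : Option (Fin N ⊕ Fin N) => o.elim X₀ (Sum.elim X₁ X₂)) P)
    (C : ℝ) (hC : C = 2 * (Real.Gamma (2 * m₂) / Real.Gamma m₂) *
      (Real.Gamma (m₁ - m₂) / Real.Gamma m₁) * (Ω₁ * Ω₂) ^ m₂)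
    (t : ℝ) (ht : t = m₀ + N * m₂)
    (ρ γth : ℝ) (hρ : 0 < ρ) (hγth : 0 < γth) :
    (P {ω | ρ * (X₀ ω + ∑ n, X₁ n ω * X₂ n ω) ^ 2 ≤ γth}).toReal ≤
      2 * (Real.Gamma (2 * m₀) / Real.Gamma m₀) * Ω₀ ^ m₀ * C ^ N *
        (γth / ρ) ^ t / Real.Gamma (2 * t + 1) := by
  subst hC ht
  have := hm₂.trans hm₁₂
  have := Real.Gamma_pos_of_pos (sub_pos.mpr hm₁₂)
  have hlaw : ∀ o, PowCDFBound (P.map (linkTerm X₀ X₁ X₂ o))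
      (o.elim (2 * (Real.Gamma (2 * m₀) / Real.Gamma m₀) * Ω₀ ^ m₀) fun _ =>
        2 * (Real.Gamma (2 * m₂) / Real.Gamma m₂) * (Real.Gamma (m₁ - m₂) / Real.Gamma m₁) *
          (Ω₁ * Ω₂) ^ m₂)
      (o.elim (2 * m₀) fun _ => 2 * m₂)
    | none => hNak₀ ▸ powCDFBound_nakagamiMeasure hm₀ hΩ₀
    | some n => (hNak₁ n).powCDFBound_map_mul (hNak₂ n) (hX₁ n) (hX₂ n)
        (hIndep.indepFun (i := some (.inl n)) (j := some (.inr n)) (by simp)) hm₂ hm₁₂ hΩ₁ hΩ₂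
  have hsum := powCDFBound_map_finsetSum (measurable_linkTerm hX₀ hX₁ hX₂)
    (fun _ _ => hIndep.indepFun_finsetSum_linkTerm hX₀ hX₁ hX₂)
    (by rintro (_ | n) <;> dsimp only [Option.elim] <;> positivity)
    (by rintro (_ | n) <;> dsimp only [Option.elim] <;> positivity) hlaw Finset.univ_nonempty
  rw [sum_linkTerm] at hsum
  simp only [Fintype.prod_option, Fintype.sum_option, Option.elim,
    Finset.prod_const, Finset.sum_const, Finset.card_univ, Fintype.card_fin, nsmul_eq_mul] at hsum
  have hmeas : Measurable fun ω => X₀ ω + ∑ n, X₁ n ω * X₂ n ω := by fun_prop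
  rw [← Set.preimage_ofPred_eq (p := fun x => ρ * x ^ 2 ≤ γth),
    ← Measure.map_apply hmeas (measurableSet_le (by fun_prop) measurable_const)]
  refine (hsum.toReal_measure_mul_sq_le (by positivity) (by positivity) hρ hγth.le).trans_eq ?_
  ring_nf

/-- Equation (28) of the paper: upper bound on the outage probability of an IRS-assisted
system with a direct link, where `H = ∑_n X_{1,n} X_{2,n}`,
`C = 2 (Γ(2m₂)/Γ(m₂)) (Γ(m₁-m₂)/Γ(m₁)) (Ω₁Ω₂)^{m₂}` and `t = m₀ + N m₂`: for `ρ, γ_th > 0`,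
`P(ρ (X₀ + H)² ≤ γ_th) ≤ 2 (Γ(2m₀)/Γ(m₀)) Ω₀^{m₀} C^N (γ_th/ρ)^t / Γ(2t + 1)`. -/
theorem irs_direct_link_outage_upper_bound
    {E : Type*} [MeasurableSpace E] (P : Measure E) [IsProbabilityMeasure P]
    (m₁ m₂ Ω₁ Ω₂ m₀ Ω₀ : ℝ) (hm₂ : 0 < m₂) (hm₁₂ : m₂ < m₁) (hΩ₁ : 0 < Ω₁) (hΩ₂ : 0 < Ω₂)
    (hm₀ : 0 < m₀) (hΩ₀ : 0 < Ω₀)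
    (N : ℕ) (hN : 0 < N)
    (X₀ : E → ℝ) (X₁ X₂ : Fin N → E → ℝ)
    (hX₀ : Measurable X₀)
    (hX₁ : ∀ n, Measurable (X₁ n)) (hX₂ : ∀ n, Measurable (X₂ n))
    (hNak₀ : IsNakagami P X₀ m₀ Ω₀)
    (hNak₁ : ∀ n, IsNakagami P (X₁ n) m₁ Ω₁) (hNak₂ : ∀ n, IsNakagami P (X₂ n) m₂ Ω₂)
    (hIndep : iIndepFun
      (fun o : Option (Fin N ⊕ Fin N) => o.elim X₀ (Sum.elim X₁ X₂)) P)
    (C : ℝ) (hC : C = 2 * (Real.Gamma (2 * m₂) / Real.Gamma m₂) *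
      (Real.Gamma (m₁ - m₂) / Real.Gamma m₁) * (Ω₁ * Ω₂) ^ m₂)
    (t : ℝ) (ht : t = m₀ + N * m₂)
    (ρ γth : ℝ) (hρ : 0 < ρ) (hγth : 0 < γth) :
    (P {ω | ρ * (X₀ ω + ∑ n, X₁ n ω * X₂ n ω) ^ 2 ≤ γth}).toReal ≤
      2 * (Real.Gamma (2 * m₀) / Real.Gamma m₀) * Ω₀ ^ m₀ * C ^ N *
        (γth / ρ) ^ t / Real.Gamma (2 * t + 1) :=
  irs_direct_link_outage_upper_bound_general P m₁ m₂ Ω₁ Ω₂ m₀ Ω₀ hm₂ hm₁₂ hΩ₁ hΩ₂ hm₀ hΩ₀ N X₀ X₁ X₂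
    hX₀ hX₁ hX₂ hNak₀ hNak₁ hNak₂ hIndep C hC t ht ρ γth hρ hγth
end
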